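/- arXiv:2101.03290 — 4 statements merged into one kernel-verified Lean document; each statement's English description precedes it below -/
import Mathlib

section
/- Let A1, A2, A3 and B1, B2, B3 be nonempty compact subsets of ℝ with A1 ⊆ A2 ⊆ A3 and B1 ⊆ B2 ⊆ B3. Then the Hausdorff distance satisfies d_H(A2, B2) ≤ d_H(A1, B3) + d_H(A3, B1). -/
theorem stmt_0 (A₁ A₂ A₃ B₁ B₂ B₃ : Set ℝ)
    (hA₁ : A₁.Nonempty) (hA₂ : A₂.Nonempty) (hA₃ : A₃.Nonempty)
    (hB₁ : B₁.Nonempty) (hB₂ : B₂.Nonempty) (hB₃ : B₃.Nonempty)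
    (hcA₁ : IsCompact A₁) (hcA₂ : IsCompact A₂) (hcA₃ : IsCompact A₃)
    (hcB₁ : IsCompact B₁) (hcB₂ : IsCompact B₂) (hcB₃ : IsCompact B₃)
    (hA12 : A₁ ⊆ A₂) (hA23 : A₂ ⊆ A₃) (hB12 : B₁ ⊆ B₂) (hB23 : B₂ ⊆ B₃) :
    Metric.hausdorffDist A₂ B₂ ≤ Metric.hausdorffDist A₁ B₃ + Metric.hausdorffDist A₃ B₁ := by
  have h31 : EMetric.hausdorffEdist A₃ B₁ ≠ ⊤ :=
    Metric.hausdorffEdist_ne_top_of_nonempty_of_bounded hA₃ hB₁ hcA₃.isBounded hcB₁.isBounded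
  have h13 : EMetric.hausdorffEdist A₁ B₃ ≠ ⊤ :=
    Metric.hausdorffEdist_ne_top_of_nonempty_of_bounded hA₁ hB₃ hcA₁.isBounded hcB₃.isBounded
  apply Metric.hausdorffDist_le_of_infDist
    (add_nonneg Metric.hausdorffDist_nonneg Metric.hausdorffDist_nonneg)
  · intro x hx
    calc Metric.infDist x B₂ ≤ Metric.infDist x B₁ :=
          Metric.infDist_le_infDist_of_subset hB12 hB₁
      _ ≤ Metric.hausdorffDist A₃ B₁ :=
          Metric.infDist_le_hausdorffDist_of_mem (hA23 hx) h31
      _ ≤ _ := le_add_of_nonneg_left Metric.hausdorffDist_nonneg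
  · intro x hx
    calc Metric.infDist x A₂ ≤ Metric.infDist x A₁ :=
          Metric.infDist_le_infDist_of_subset hA12 hA₁
      _ ≤ Metric.hausdorffDist A₁ B₃ := by
          rw [Metric.hausdorffDist_comm] at *
          exact Metric.infDist_le_hausdorffDist_of_mem (hB23 hx)
            (by rwa [EMetric.hausdorffEdist_comm])
      _ ≤ _ := le_add_of_nonneg_right Metric.hausdorffDist_nonneg
end

section
/- Let (E, d) be a metric space and let A1, A2, A3 and B1, B2, B3 be nonempty bounded closed subsets of E with A1 ⊆ A2 ⊆ A3 and B1 ⊆ B2 ⊆ B3. Then the Hausdorff distance satisfies d_H(A2, B2) ≤ max{ d_H(A1, B3), d_H(A3, B1) }. -/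
/-! Every point of `A₂ ⊆ A₃` is within `d_H(A₃, B₁)` of `B₁ ⊆ B₂`, and symmetrically every point
of `B₂ ⊆ B₃` is within `d_H(A₁, B₃)` of `A₁ ⊆ A₂`. -/

open Metric

theorem Metric.infDist_le_hausdorffDist_of_mem_of_subset {E : Type*} [MetricSpace E]
    {s t t' : Set E} {x : E} (hx : x ∈ s) (ht' : t' ⊆ t) (hne : t'.Nonempty)
    (hfin : hausdorffEDist s t' ≠ ⊤) :
    infDist x t ≤ hausdorffDist s t' :=
  (infDist_le_infDist_of_subset ht' hne).trans (infDist_le_hausdorffDist_of_mem hx hfin)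

theorem stmt_1_general {E : Type*} [MetricSpace E] (A₁ A₂ A₃ B₁ B₂ B₃ : Set E)
    (hA₁ : A₁.Nonempty) (hA₃ : A₃.Nonempty)
    (hB₁ : B₁.Nonempty) (hB₃ : B₃.Nonempty)
    (hbA₁ : Bornology.IsBounded A₁)
    (hbA₃ : Bornology.IsBounded A₃)
    (hbB₁ : Bornology.IsBounded B₁)
    (hbB₃ : Bornology.IsBounded B₃)
    (hA12 : A₁ ⊆ A₂) (hA23 : A₂ ⊆ A₃) (hB12 : B₁ ⊆ B₂) (hB23 : B₂ ⊆ B₃) :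
    Metric.hausdorffDist A₂ B₂ ≤ max (Metric.hausdorffDist A₁ B₃) (Metric.hausdorffDist A₃ B₁) := by
  have hfinA₃B₁ := hausdorffEDist_ne_top_of_nonempty_of_bounded hA₃ hB₁ hbA₃ hbB₁
  have hfinB₃A₁ := hausdorffEDist_ne_top_of_nonempty_of_bounded hB₃ hA₁ hbB₃ hbA₁
  refine hausdorffDist_le_of_infDist (hausdorffDist_nonneg.trans (le_max_left _ _)) ?_ ?_
  · intro x hx
    exact (infDist_le_hausdorffDist_of_mem_of_subset (hA23 hx) hB12 hB₁ hfinA₃B₁).trans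
      (le_max_right _ _)
  · intro x hx
    rw [hausdorffDist_comm]
    exact (infDist_le_hausdorffDist_of_mem_of_subset (hB23 hx) hA12 hA₁ hfinB₃A₁).trans
      (le_max_left _ _)

theorem stmt_1 {E : Type*} [MetricSpace E] (A₁ A₂ A₃ B₁ B₂ B₃ : Set E)
    (hA₁ : A₁.Nonempty) (hA₂ : A₂.Nonempty) (hA₃ : A₃.Nonempty)
    (hB₁ : B₁.Nonempty) (hB₂ : B₂.Nonempty) (hB₃ : B₃.Nonempty)
    (hbA₁ : Bornology.IsBounded A₁) (hbA₂ : Bornology.IsBounded A₂)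
    (hbA₃ : Bornology.IsBounded A₃)
    (hbB₁ : Bornology.IsBounded B₁) (hbB₂ : Bornology.IsBounded B₂)
    (hbB₃ : Bornology.IsBounded B₃)
    (hclA₁ : IsClosed A₁) (hclA₂ : IsClosed A₂) (hclA₃ : IsClosed A₃)
    (hclB₁ : IsClosed B₁) (hclB₂ : IsClosed B₂) (hclB₃ : IsClosed B₃)
    (hA12 : A₁ ⊆ A₂) (hA23 : A₂ ⊆ A₃) (hB12 : B₁ ⊆ B₂) (hB23 : B₂ ⊆ B₃) :
    Metric.hausdorffDist A₂ B₂ ≤ max (Metric.hausdorffDist A₁ B₃) (Metric.hausdorffDist A₃ B₁) :=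
  stmt_1_general A₁ A₂ A₃ B₁ B₂ B₃ hA₁ hA₃ hB₁ hB₃ hbA₁ hbA₃ hbB₁ hbB₃ hA12 hA23 hB12 hB23
end

section
/- Let (Ω, 𝒜, P) be a probability space. Let (f_j) and (g_j) be sequences of real-valued random variables on Ω that are pointwise nondecreasing in j and converge pointwise to random variables f and g respectively, with f_1, g_1, f, g all square-integrable. If f_j and g_j are uncorrelated for every j, i.e. Cov(f_j, g_j) = 0, then f and g are uncorrelated: Cov(f, g) = 0. -/
open MeasureTheory Filter Topology

/-! A monotone sequence lies between its first term and its limit, so `|f j| ≤ |f 0| + |flim|`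
uniformly in `j`. For square-integrable `f 0`, `flim`, `g 0`, `glim` this dominates `f j`, `g j`
and (by Cauchy–Schwarz) `f j * g j` by integrable functions, and dominated convergence passes
`∫ f j * g j - ∫ f j * ∫ g j = 0` to the limit. -/

lemma abs_le_abs_add_abs_of_monotone_of_tendsto {u : ℕ → ℝ} {a : ℝ} (hu : Monotone u)
    (ha : Tendsto u atTop (𝓝 a)) (n : ℕ) : |u n| ≤ |u 0| + |a| :=
  (abs_le_max_abs_abs (hu n.zero_le) (hu.ge_of_tendsto ha n)).trans
    (max_le_add_of_nonneg (abs_nonneg _) (abs_nonneg _))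

section MonotoneConvergence

variable {Ω : Type*} [MeasurableSpace Ω] {μ : Measure Ω} {f g : ℕ → Ω → ℝ} {F G : Ω → ℝ}

lemma ae_abs_le_of_monotone_of_tendsto (hf_mono : ∀ᵐ x ∂μ, Monotone fun n ↦ f n x)
    (hf_tendsto : ∀ᵐ x ∂μ, Tendsto (fun n ↦ f n x) atTop (𝓝 (F x))) (n : ℕ) :
    ∀ᵐ x ∂μ, |f n x| ≤ |f 0 x| + |F x| := by
  filter_upwards [hf_mono, hf_tendsto] with x hx_mono hx_tendsto
  exact abs_le_abs_add_abs_of_monotone_of_tendsto hx_mono hx_tendsto n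

lemma tendsto_integral_of_monotone_of_integrable (hfm : ∀ n, AEStronglyMeasurable (f n) μ)
    (hf_mono : ∀ᵐ x ∂μ, Monotone fun n ↦ f n x)
    (hf_tendsto : ∀ᵐ x ∂μ, Tendsto (fun n ↦ f n x) atTop (𝓝 (F x)))
    (hf0 : Integrable (f 0) μ) (hF : Integrable F μ) :
    Tendsto (fun n ↦ ∫ x, f n x ∂μ) atTop (𝓝 (∫ x, F x ∂μ)) := by
  have hf : ∀ n, Integrable (f n) μ := fun n ↦
    (hf0.abs.add hF.abs).mono' (hfm n) (ae_abs_le_of_monotone_of_tendsto hf_mono hf_tendsto n)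
  exact integral_tendsto_of_tendsto_of_monotone hf hF hf_mono hf_tendsto

lemma tendsto_integral_mul_of_monotone_of_memLp_two
    (hfm : ∀ n, AEStronglyMeasurable (f n) μ) (hgm : ∀ n, AEStronglyMeasurable (g n) μ)
    (hf_mono : ∀ᵐ x ∂μ, Monotone fun n ↦ f n x) (hg_mono : ∀ᵐ x ∂μ, Monotone fun n ↦ g n x)
    (hf_tendsto : ∀ᵐ x ∂μ, Tendsto (fun n ↦ f n x) atTop (𝓝 (F x)))
    (hg_tendsto : ∀ᵐ x ∂μ, Tendsto (fun n ↦ g n x) atTop (𝓝 (G x)))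
    (hf0 : MemLp (f 0) 2 μ) (hF : MemLp F 2 μ) (hg0 : MemLp (g 0) 2 μ) (hG : MemLp G 2 μ) :
    Tendsto (fun n ↦ ∫ x, f n x * g n x ∂μ) atTop (𝓝 (∫ x, F x * G x ∂μ)) := by
  have h_bound : Integrable (fun x ↦ (|f 0 x| + |F x|) * (|g 0 x| + |G x|)) μ :=
    (hf0.abs.add hF.abs).integrable_mul (hg0.abs.add hG.abs)
  refine tendsto_integral_of_dominated_convergence _ (fun n ↦ (hfm n).mul (hgm n)) h_bound
    (fun n ↦ ?_) ?_
  · filter_upwards [ae_abs_le_of_monotone_of_tendsto hf_mono hf_tendsto n,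
      ae_abs_le_of_monotone_of_tendsto hg_mono hg_tendsto n] with x hfx hgx
    rw [Real.norm_eq_abs, abs_mul]
    exact mul_le_mul hfx hgx (abs_nonneg _) (by positivity)
  · filter_upwards [hf_tendsto, hg_tendsto] with x hfx hgx
    exact hfx.mul hgx

end MonotoneConvergence

theorem stmt_10_general {Ω : Type*} [MeasurableSpace Ω] (P : Measure Ω) [IsProbabilityMeasure P]
    (f g : ℕ → Ω → ℝ) (flim glim : Ω → ℝ)
    (hfm : ∀ j, Measurable (f j)) (hgm : ∀ j, Measurable (g j))
    (hfmono : ∀ ω, Monotone fun j => f j ω) (hgmono : ∀ ω, Monotone fun j => g j ω)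
    (hftend : ∀ ω, Tendsto (fun j => f j ω) atTop (nhds (flim ω)))
    (hgtend : ∀ ω, Tendsto (fun j => g j ω) atTop (nhds (glim ω)))
    (hf0 : MemLp (f 0) 2 P) (hg0 : MemLp (g 0) 2 P)
    (hflim : MemLp flim 2 P) (hglim : MemLp glim 2 P)
    (huncorr : ∀ j,
      (∫ ω, f j ω * g j ω ∂P) - (∫ ω, f j ω ∂P) * (∫ ω, g j ω ∂P) = 0) :
    (∫ ω, flim ω * glim ω ∂P) - (∫ ω, flim ω ∂P) * (∫ ω, glim ω ∂P) = 0 := by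
  have hfm' := fun j ↦ (hfm j).aestronglyMeasurable (μ := P)
  have hgm' := fun j ↦ (hgm j).aestronglyMeasurable (μ := P)
  have hf_int := tendsto_integral_of_monotone_of_integrable hfm' (ae_of_all _ hfmono)
    (ae_of_all _ hftend) (hf0.integrable one_le_two) (hflim.integrable one_le_two)
  have hg_int := tendsto_integral_of_monotone_of_integrable hgm' (ae_of_all _ hgmono)
    (ae_of_all _ hgtend) (hg0.integrable one_le_two) (hglim.integrable one_le_two)
  have hfg_int := tendsto_integral_mul_of_monotone_of_memLp_two hfm' hgm' (ae_of_all _ hfmono)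
    (ae_of_all _ hgmono) (ae_of_all _ hftend) (ae_of_all _ hgtend) hf0 hflim hg0 hglim
  have hcov := hfg_int.sub (hf_int.mul hg_int)
  simp only [huncorr] at hcov
  exact tendsto_nhds_unique tendsto_const_nhds hcov |>.symm

theorem stmt_10 {Ω : Type*} [MeasurableSpace Ω] (P : Measure Ω) [IsProbabilityMeasure P]
    (f g : ℕ → Ω → ℝ) (flim glim : Ω → ℝ)
    (hfm : ∀ j, Measurable (f j)) (hgm : ∀ j, Measurable (g j))
    (hflimm : Measurable flim) (hglimm : Measurable glim)
    (hfmono : ∀ ω, Monotone fun j => f j ω) (hgmono : ∀ ω, Monotone fun j => g j ω)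
    (hftend : ∀ ω, Tendsto (fun j => f j ω) atTop (nhds (flim ω)))
    (hgtend : ∀ ω, Tendsto (fun j => g j ω) atTop (nhds (glim ω)))
    (hf0 : MemLp (f 0) 2 P) (hg0 : MemLp (g 0) 2 P)
    (hflim : MemLp flim 2 P) (hglim : MemLp glim 2 P)
    (huncorr : ∀ j,
      (∫ ω, f j ω * g j ω ∂P) - (∫ ω, f j ω ∂P) * (∫ ω, g j ω ∂P) = 0) :
    (∫ ω, flim ω * glim ω ∂P) - (∫ ω, flim ω ∂P) * (∫ ω, glim ω ∂P) = 0 :=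
  stmt_10_general P f g flim glim hfm hgm hfmono hgmono hftend hgtend hf0 hg0 hflim hglim huncorr
end

section
/- Let K : (0,1] → (nonempty compact subsets of ℝ) be an antitone family (β ≤ α implies K_α ⊆ K_β) such that K_α = ⋂_{β<α, β∈(0,1]} K_β for every α ∈ (0,1], and such that closure(⋃_{α∈(0,1]} K_α) is compact. For α ∈ [0,1) write K_{α+} := closure(⋃_{β>α} K_β). Then for every ε > 0 there exist finitely many points 0 = α_0 < α_1 < ⋯ < α_m = 1 such that d_H(K_{α_k}, K_{α_{k−1}+}) < ε for every k = 1, …, m. -/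
private lemma aux_left (K : ℝ → Set ℝ)
    (hcomp : ∀ α ∈ Set.Ioc (0 : ℝ) 1, IsCompact (K α))
    (hanti : ∀ α ∈ Set.Ioc (0 : ℝ) 1, ∀ β ∈ Set.Ioc (0 : ℝ) 1, β ≤ α → K α ⊆ K β)
    (hcap : ∀ α ∈ Set.Ioc (0 : ℝ) 1, K α = ⋂ β ∈ Set.Ioc (0 : ℝ) 1 ∩ Set.Iio α, K β)
    {α : ℝ} (hα : α ∈ Set.Ioc (0:ℝ) 1) {ε : ℝ} (hε : 0 < ε) :
    ∃ δ > 0, ∀ β ∈ Set.Ioc (0:ℝ) 1, α - δ < β → β < α →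
      K β ⊆ Metric.cthickening ε (K α) := by
  obtain ⟨hα0, hα1⟩ := hα
  set g : ℕ → ℝ := fun n => α - (α/2)/(n+1) with hg
  have hgval : ∀ n : ℕ, 0 < (α/2)/((n:ℝ)+1) ∧ (α/2)/((n:ℝ)+1) ≤ α/2 := by
    intro n
    have h1 : (0:ℝ) < (n:ℝ)+1 := by positivity
    constructor
    · positivity
    · apply div_le_self (by linarith) (by linarith)
  have hgmem : ∀ n, g n ∈ Set.Ioc (0:ℝ) 1 := by
    intro n
    obtain ⟨h3, h2⟩ := hgval n
    exact ⟨by simp only [hg]; linarith, by simp only [hg]; linarith⟩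
  have hglt : ∀ n, g n < α := by
    intro n
    obtain ⟨h3, -⟩ := hgval n
    simp only [hg]; linarith
  have hgmono : ∀ m n : ℕ, m ≤ n → g m ≤ g n := by
    intro m n hmn
    have h1 : (0:ℝ) < (m:ℝ)+1 := by positivity
    have : (α/2)/((n:ℝ)+1) ≤ (α/2)/((m:ℝ)+1) := by
      have h2 : ((m:ℝ)+1) ≤ ((n:ℝ)+1) := by exact_mod_cast Nat.succ_le_succ hmn
      gcongr
    simp only [hg]; linarith
  have hInt : ∀ x, (∀ n, x ∈ K (g n)) → x ∈ K α := by
    intro x hx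
    rw [hcap α ⟨hα0, hα1⟩]
    refine Set.mem_iInter₂.mpr ?_
    rintro γ ⟨hγ1, hγ2⟩
    have hγα : γ < α := hγ2
    have hαγ : 0 < α - γ := by linarith
    obtain ⟨n, hn⟩ := exists_nat_gt ((α/2)/(α - γ))
    have h1 : (0:ℝ) < (n:ℝ)+1 := by positivity
    have h2 : (α/2)/(α-γ) < (n:ℝ)+1 := lt_of_lt_of_le hn (by linarith)
    have h3 : α/2 < ((n:ℝ)+1) * (α-γ) := by
      rw [div_lt_iff₀ hαγ] at h2
      linarith [h2]
    have hle : γ ≤ g n := by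
      have : (α/2)/((n:ℝ)+1) ≤ α - γ := by
        rw [div_le_iff₀ h1]; nlinarith
      simp only [hg]; linarith
    exact hanti (g n) (hgmem n) γ hγ1 hle (hx n)
  set U := Metric.thickening ε (K α) with hU
  have hUopen : IsOpen U := Metric.isOpen_thickening
  have hC : IsCompact (K (g 0) ∩ Uᶜ) :=
    (hcomp _ (hgmem 0)).inter_right hUopen.isClosed_compl
  have hempty : (K (g 0) ∩ Uᶜ) ∩ ⋂ n, K (g n) = ∅ := by
    ext x
    simp only [Set.mem_inter_iff, Set.mem_iInter, Set.mem_empty_iff_false, iff_false,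
      Set.mem_compl_iff, not_and]
    rintro ⟨-, hxU⟩ hxn
    exact hxU (Metric.self_subset_thickening hε _ (hInt x hxn))
  obtain ⟨t, ht⟩ := hC.elim_finite_subfamily_closed (fun n => K (g n))
    (fun n => (hcomp _ (hgmem n)).isClosed) hempty
  set N := t.sup id with hN
  have hsub : K (g N) ⊆ U := by
    intro x hx
    by_contra hxU
    have hx0 : x ∈ K (g 0) :=
      hanti (g N) (hgmem N) (g 0) (hgmem 0) (hgmono 0 N (Nat.zero_le N)) hx
    have hmem : x ∈ (K (g 0) ∩ Uᶜ) ∩ ⋂ n ∈ t, K (g n) :=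
      ⟨⟨hx0, hxU⟩, Set.mem_iInter₂.mpr fun n hn =>
        hanti (g N) (hgmem N) (g n) (hgmem n)
          (hgmono n N (Finset.le_sup (f := id) hn)) hx⟩
    rw [ht] at hmem
    exact hmem
  refine ⟨α - g N, sub_pos.mpr (hglt N), ?_⟩
  intro β hβ h1 h2
  have hgNβ : g N ≤ β := by linarith
  exact (hanti β hβ (g N) (hgmem N) hgNβ).trans
    (hsub.trans (Metric.thickening_subset_cthickening ε (K α)))

private lemma aux_right (K : ℝ → Set ℝ)
    (hne : ∀ α ∈ Set.Ioc (0 : ℝ) 1, (K α).Nonempty)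
    (hanti : ∀ α ∈ Set.Ioc (0 : ℝ) 1, ∀ β ∈ Set.Ioc (0 : ℝ) 1, β ≤ α → K α ⊆ K β)
    (hsupp : IsCompact (closure (⋃ α ∈ Set.Ioc (0 : ℝ) 1, K α)))
    {s : ℝ} (_hs0 : 0 ≤ s) (hs1 : s < 1) {ε : ℝ} (hε : 0 < ε) :
    ∃ t ∈ Set.Ioc s 1, closure (⋃ β ∈ Set.Ioc (0:ℝ) 1 ∩ Set.Ioi s, K β) ⊆
      Metric.cthickening ε (K t) := by
  set T := closure (⋃ β ∈ Set.Ioc (0:ℝ) 1 ∩ Set.Ioi s, K β) with hT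
  have hTsub : T ⊆ closure (⋃ α ∈ Set.Ioc (0:ℝ) 1, K α) :=
    closure_mono (Set.biUnion_subset_biUnion_left Set.inter_subset_left)
  have hTcomp : IsCompact T := hsupp.of_isClosed_subset isClosed_closure hTsub
  have hcov : T ⊆ ⋃ t ∈ Set.Ioc (0:ℝ) 1 ∩ Set.Ioi s, Metric.thickening ε (K t) := by
    intro x hx
    obtain ⟨y, hyU, hxy⟩ := Metric.mem_closure_iff.mp hx ε hε
    obtain ⟨t, ht, hyt⟩ := Set.mem_iUnion₂.mp hyU
    exact Set.mem_iUnion₂.mpr ⟨t, ht, Metric.mem_thickening_iff.mpr ⟨y, hyt, hxy⟩⟩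
  obtain ⟨F, hFsub, hFfin, hFcov⟩ := hTcomp.elim_finite_subcover_image
    (fun t _ => Metric.isOpen_thickening) hcov
  have h1mem : (1:ℝ) ∈ Set.Ioc (0:ℝ) 1 ∩ Set.Ioi s := ⟨⟨one_pos, le_refl 1⟩, hs1⟩
  obtain ⟨x, hx1⟩ := hne 1 ⟨one_pos, le_refl 1⟩
  have hxT : x ∈ T := subset_closure (Set.mem_iUnion₂.mpr ⟨1, h1mem, hx1⟩)
  obtain ⟨t1, ht1F, -⟩ := Set.mem_iUnion₂.mp (hFcov hxT)
  have hF'ne : hFfin.toFinset.Nonempty := by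
    rw [Set.Finite.toFinset_nonempty]
    exact ⟨t1, ht1F⟩
  set t0 := hFfin.toFinset.min' hF'ne with ht0def
  have ht0F : t0 ∈ F := by
    have := hFfin.toFinset.min'_mem hF'ne
    rwa [Set.Finite.mem_toFinset] at this
  have ht0 : t0 ∈ Set.Ioc (0:ℝ) 1 ∩ Set.Ioi s := hFsub ht0F
  refine ⟨t0, ⟨ht0.2, ht0.1.2⟩, ?_⟩
  intro x hx
  obtain ⟨t, htF, hxt⟩ := Set.mem_iUnion₂.mp (hFcov hx)
  obtain ⟨y, hyt, hxy⟩ := Metric.mem_thickening_iff.mp hxt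
  have hyt0 : y ∈ K t0 :=
    hanti t (hFsub htF).1 t0 ht0.1
      (hFfin.toFinset.min'_le t (by rwa [Set.Finite.mem_toFinset])) hyt
  exact Metric.mem_cthickening_of_dist_le x y ε _ hyt0 (le_of_lt hxy)

theorem stmt_12 (K : ℝ → Set ℝ)
    (hne : ∀ α ∈ Set.Ioc (0 : ℝ) 1, (K α).Nonempty)
    (hcomp : ∀ α ∈ Set.Ioc (0 : ℝ) 1, IsCompact (K α))
    (hanti : ∀ α ∈ Set.Ioc (0 : ℝ) 1, ∀ β ∈ Set.Ioc (0 : ℝ) 1, β ≤ α → K α ⊆ K β)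
    (hcap : ∀ α ∈ Set.Ioc (0 : ℝ) 1, K α = ⋂ β ∈ Set.Ioc (0 : ℝ) 1 ∩ Set.Iio α, K β)
    (hsupp : IsCompact (closure (⋃ α ∈ Set.Ioc (0 : ℝ) 1, K α))) :
    ∀ ε > (0 : ℝ), ∃ m : ℕ, 0 < m ∧ ∃ a : ℕ → ℝ,
      a 0 = 0 ∧ a m = 1 ∧ (∀ k < m, a k < a (k + 1)) ∧
      ∀ k < m, Metric.hausdorffDist (K (a (k + 1)))
        (closure (⋃ β ∈ Set.Ioc (0 : ℝ) 1 ∩ Set.Ioi (a k), K β)) < ε := by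
  intro ε hε
  have hε2 : 0 < ε/2 := by linarith
  -- the link property
  set Lcl : ℝ → ℝ → Prop := fun p q =>
    closure (⋃ β ∈ Set.Ioc (0:ℝ) 1 ∩ Set.Ioi p, K β) ⊆ Metric.cthickening (ε/2) (K q)
    with hLcl
  -- distance conclusion from the link property
  have hdist : ∀ p q, q ∈ Set.Ioc (0:ℝ) 1 → p < q → Lcl p q →
      Metric.hausdorffDist (K q)
        (closure (⋃ β ∈ Set.Ioc (0:ℝ) 1 ∩ Set.Ioi p, K β)) < ε := by
    intro p q hq hpq hL
    have hqmem : q ∈ Set.Ioc (0:ℝ) 1 ∩ Set.Ioi p := ⟨hq, hpq⟩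
    have hsub : K q ⊆ closure (⋃ β ∈ Set.Ioc (0:ℝ) 1 ∩ Set.Ioi p, K β) :=
      (Set.subset_biUnion_of_mem hqmem).trans subset_closure
    have hle : Metric.hausdorffDist (K q)
        (closure (⋃ β ∈ Set.Ioc (0:ℝ) 1 ∩ Set.Ioi p, K β)) ≤ ε/2 := by
      apply Metric.hausdorffDist_le_of_mem_dist (le_of_lt hε2)
      · intro x hx
        exact ⟨x, hsub hx, by rw [dist_self]; positivity⟩
      · intro x hx
        have hx' := hL hx
        obtain ⟨y, hyq, hxy⟩ := (hcomp q hq).exists_infDist_eq_dist (hne q hq) x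
        refine ⟨y, hyq, ?_⟩
        rw [← hxy]
        have h2 := Metric.mem_cthickening_iff.mp hx'
        calc Metric.infDist x (K q) = (EMetric.infEdist x (K q)).toReal := rfl
          _ ≤ (ENNReal.ofReal (ε/2)).toReal := ENNReal.toReal_mono ENNReal.ofReal_ne_top h2
          _ = ε/2 := ENNReal.toReal_ofReal (le_of_lt hε2)
    linarith
  -- bottom step
  obtain ⟨c, hc, hLc⟩ := aux_right K hne hanti hsupp le_rfl one_pos hε2
  -- the set of reachable points
  set P : Set ℝ := {α | α ∈ Set.Icc c 1 ∧ ∃ n : ℕ, ∃ b : ℕ → ℝ, b 0 = c ∧ b n = α ∧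
    (∀ k < n, b k < b (k+1)) ∧ ∀ k < n, Lcl (b k) (b (k+1))} with hP
  have hcP : c ∈ P :=
    ⟨⟨le_rfl, hc.2⟩, 0, fun _ => c, rfl, rfl,
      fun k hk => absurd hk (Nat.not_lt_zero k), fun k hk => absurd hk (Nat.not_lt_zero k)⟩
  have hPne : P.Nonempty := ⟨c, hcP⟩
  have hPbdd : BddAbove P := ⟨1, fun x hx => hx.1.2⟩
  set s := sSup P with hsdef
  have hsc : c ≤ s := le_csSup hPbdd hcP
  have hs1 : s ≤ 1 := csSup_le hPne fun x hx => hx.1.2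
  have hsIoc : s ∈ Set.Ioc (0:ℝ) 1 := ⟨lt_of_lt_of_le hc.1 hsc, hs1⟩
  -- chain extension helper
  have hext : ∀ p ∈ P, ∀ q, p < q → q ≤ 1 → Lcl p q → q ∈ P := by
    rintro p ⟨⟨hcp, hp1⟩, n, b, hb0, hbn, hbinc, hblink⟩ q hpq hq1 hL
    refine ⟨⟨le_trans hcp (le_of_lt hpq), hq1⟩, n+1,
      fun k => if k ≤ n then b k else q, by simp [hb0], by simp, ?_, ?_⟩
    · intro k hk
      by_cases h : k < n
      · simp only [if_pos h.le, if_pos (show k+1 ≤ n from h)]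
        exact hbinc k h
      · have hk' : k = n := by omega
        subst hk'
        simp only [if_pos (le_refl k), if_neg (show ¬ k+1 ≤ k by omega)]
        rw [hbn]; exact hpq
    · intro k hk
      by_cases h : k < n
      · simp only [if_pos h.le, if_pos (show k+1 ≤ n from h)]
        exact hblink k h
      · have hk' : k = n := by omega
        subst hk'
        simp only [if_pos (le_refl k), if_neg (show ¬ k+1 ≤ k by omega)]
        rw [hbn]; exact hL
  -- s ∈ P via left continuity
  obtain ⟨δ, hδpos, hδ⟩ := aux_left K hcomp hanti hcap hsIoc hε2
  have hsP : s ∈ P := by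
    obtain ⟨p, hpP, hps⟩ := exists_lt_of_lt_csSup hPne (show s - δ < sSup P by
      rw [← hsdef]; linarith)
    have hple : p ≤ s := le_csSup hPbdd hpP
    rcases eq_or_lt_of_le hple with h | h
    · rwa [h] at hpP
    · refine hext p hpP s h hs1 ?_
      refine closure_minimal ?_ Metric.isClosed_cthickening
      intro x hx
      obtain ⟨β, hβ, hxβ⟩ := Set.mem_iUnion₂.mp hx
      have hβp : p < β := hβ.2
      rcases lt_or_ge β s with hlt | hge
      · exact hδ β hβ.1 (by linarith) hlt hxβ
      · exact Metric.self_subset_cthickening _ (hanti β hβ.1 s hsIoc hge hxβ)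
  -- s = 1 via right continuity
  have hs_eq : s = 1 := by
    by_contra hne1
    have hslt : s < 1 := lt_of_le_of_ne hs1 hne1
    obtain ⟨t, htIoc, hLt⟩ := aux_right K hne hanti hsupp (le_of_lt hsIoc.1) hslt hε2
    have htP : t ∈ P := hext s hsP t htIoc.1 htIoc.2 hLt
    exact absurd (le_csSup hPbdd htP) (not_le.mpr htIoc.1)
  rw [hs_eq] at hsP
  obtain ⟨-, n, b, hb0, hbn, hbinc, hblink⟩ := hsP
  -- monotonicity and membership of the chain
  have hbmono : ∀ l, l ≤ n → ∀ k, k ≤ l → b k ≤ b l := by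
    intro l
    induction l with
    | zero =>
      intro _ k hk
      have : k = 0 := Nat.le_zero.mp hk
      subst this; exact le_rfl
    | succ l ih =>
      intro hl k hk
      rcases Nat.lt_or_ge k (l+1) with h | h
      · exact le_trans (ih (by omega) k (by omega)) (le_of_lt (hbinc l (by omega)))
      · have : k = l+1 := by omega
        subst this; exact le_rfl
  have hbIoc : ∀ k, k ≤ n → b k ∈ Set.Ioc (0:ℝ) 1 := by
    intro k hk
    constructor
    · have h := hbmono k hk 0 (Nat.zero_le k)
      rw [hb0] at h; linarith [hc.1]
    · have h := hbmono n le_rfl k hk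
      rw [hbn] at h; exact h
  -- final assembly
  refine ⟨n+1, Nat.succ_pos n, fun k => if k = 0 then 0 else b (k-1), by simp, ?_, ?_, ?_⟩
  · simp
    exact hbn
  · intro k hk
    by_cases h : k = 0
    · subst h
      simp only [if_pos rfl, if_neg (Nat.one_ne_zero)]
      simpa [hb0] using hc.1
    · simp only [if_neg h, if_neg (Nat.succ_ne_zero k)]
      have hk1 : k - 1 < n := by omega
      have : k + 1 - 1 = (k-1) + 1 := by omega
      rw [this]
      exact hbinc (k-1) hk1
  · intro k hk
    by_cases h : k = 0
    · subst h
      simp only [if_pos rfl, if_neg (Nat.one_ne_zero)]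
      apply hdist 0 (b (1-1))
      · simpa using hbIoc 0 (Nat.zero_le n)
      · simpa [hb0] using hc.1
      · show Lcl 0 (b 0)
        simp only [hLcl]
        rw [hb0]
        exact hLc
    · simp only [if_neg h, if_neg (Nat.succ_ne_zero k)]
      have hk1 : k - 1 < n := by omega
      have heq : k + 1 - 1 = (k-1) + 1 := by omega
      rw [heq]
      exact hdist (b (k-1)) (b ((k-1)+1)) (hbIoc ((k-1)+1) (by omega))
        (hbinc (k-1) hk1) (hblink (k-1) hk1)
end
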